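/- Let M be a square matrix over a commutative ring, let R be a set of rows and L a set of columns, and suppose that every nonzero term in the Leibniz expansion of det(M) contains exactly one factor M_{r,c} with (r,c) ∈ R × L. Then det(M) equals the sum over c ∈ L of the determinants of the matrices obtained from M by zeroing all entries in positions R × (L \ {c}). -/

import Mathlib

/-- If every nonzero Leibniz term of det(M) uses exactly one entry from R × L, then det(M)
equals the sum over c ∈ L of the determinants of the matrices obtained from M by zeroing all
entries in positions R × (L \ {c}). -/
theorem det_sum_zeroed_columns {K : Type*} [CommRing K] {N : ℕ}
    (M : Matrix (Fin N) (Fin N) K) (R : Finset (Fin N)) (L : Finset (Fin N))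
    (h : ∀ π : Equiv.Perm (Fin N), (∏ i, M i (π i)) ≠ 0 →
      (R.filter (fun r => π r ∈ L)).card = 1) :
    M.det = ∑ c ∈ L,
      (Matrix.of fun i j => if i ∈ R ∧ j ∈ L ∧ j ≠ c then 0 else M i j).det := by
  simp only [Matrix.det_apply]
  rw [Finset.sum_comm]
  refine Finset.sum_congr rfl fun σ _ => ?_
  rw [← Finset.smul_sum]
  congr 1
  by_cases h0 : (∏ i, M (σ i) i) = 0
  · rw [h0]
    refine (Finset.sum_eq_zero fun c _ => ?_).symm
    by_cases hex : ∃ i, σ i ∈ R ∧ i ∈ L ∧ i ≠ c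
    · obtain ⟨i, hi⟩ := hex
      exact Finset.prod_eq_zero (Finset.mem_univ i) (by simp [hi])
    · push_neg at hex
      rw [← h0]
      refine Finset.prod_congr rfl fun i _ => ?_
      simp only [Matrix.of_apply]
      rw [if_neg]
      rintro ⟨h1, h2, h3⟩
      exact h3 (hex i h1 h2)
  · have key : (∏ i, M (σ i) i) = ∏ i, M i (σ⁻¹ i) := by
      rw [← Equiv.prod_comp σ (fun i => M i (σ⁻¹ i))]
      simp
    have hcard := h σ⁻¹ (by rw [← key]; exact h0)
    obtain ⟨r, hr⟩ := Finset.card_eq_one.mp hcard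
    have hrmem : r ∈ R ∧ σ⁻¹ r ∈ L := by
      have : r ∈ R.filter (fun r => σ⁻¹ r ∈ L) := hr ▸ Finset.mem_singleton_self r
      simpa using this
    have huniq : ∀ x, x ∈ R → σ⁻¹ x ∈ L → x = r := by
      intro x hx hx'
      have : x ∈ R.filter (fun r => σ⁻¹ r ∈ L) := Finset.mem_filter.mpr ⟨hx, hx'⟩
      rw [hr] at this
      simpa using this
    set c0 := σ⁻¹ r with hc0
    rw [Finset.sum_eq_single_of_mem c0 hrmem.2]
    · refine (Finset.prod_congr rfl fun i _ => ?_).symm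
      simp only [Matrix.of_apply]
      rw [if_neg]
      rintro ⟨h1, h2, h3⟩
      apply h3
      have := huniq (σ i) h1 (by simpa using h2)
      rw [hc0, ← this]
      simp
    · intro c hc hne
      refine Finset.prod_eq_zero (Finset.mem_univ c0) ?_
      have : σ c0 = r := by rw [hc0]; simp
      simp [this, hrmem.1, hrmem.2, Ne.symm hne]
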